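/- Let d ≥ 2, k ≥ 1, let ρ_s, ρ_a be the symmetric and antisymmetric Werner states on ℂ^{d}⊗ℂ^{d}, and set τ₁ = ((ρ_s+ρ_a)/2)^{⊗k}, τ₂ = ρ_s^{⊗k}. Let |φ_±⟩ = (|00⟩±|11⟩)/√2 and |ψ_±⟩ = (|01⟩±|10⟩)/√2 be the Bell states on ℂ²⊗ℂ², and define ρ = (1/4)(|φ₊⟩⟨φ₊|⊗τ₁⊗τ₁ + |φ₋⟩⟨φ₋|⊗τ₁⊗τ₂ + |ψ₊⟩⟨ψ₊|⊗τ₂⊗τ₁ + |ψ₋⟩⟨ψ₋|⊗τ₂⊗τ₂). Then ρ has non-positive partial transpose (is NPT) with respect to the cut separating Bob's subsystems (the second qubit factor together with Bob's halves of the Werner-state factors) from Alice's: the partial transpose ρ^{Γ} is not positive semidefinite. -/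

import Mathlib

open Matrix Kronecker BigOperators
open scoped ComplexOrder Classical
open Finset

/-- The swap operator `V = Σ_{i,j}|ij⟩⟨ji|` on `ℂ^d ⊗ ℂ^d`. -/
def swapOp (d : ℕ) : Matrix (Fin d × Fin d) (Fin d × Fin d) ℂ :=
  Matrix.of fun x y => if x.1 = y.2 ∧ x.2 = y.1 then 1 else 0

/-- The symmetric Werner state `ρ_s = (2/(d²+d)) P_sym` with `P_sym = (I+V)/2`. -/
noncomputable def wernerSym (d : ℕ) : Matrix (Fin d × Fin d) (Fin d × Fin d) ℂ :=
  ((2 / ((d : ℝ) ^ 2 + d) : ℝ) : ℂ) •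
    (((1 : ℂ) / 2) • ((1 : Matrix (Fin d × Fin d) (Fin d × Fin d) ℂ) + swapOp d))

/-- The antisymmetric Werner state `ρ_a = (2/(d²−d)) P_asym` with `P_asym = (I−V)/2`. -/
noncomputable def wernerAsym (d : ℕ) : Matrix (Fin d × Fin d) (Fin d × Fin d) ℂ :=
  ((2 / ((d : ℝ) ^ 2 - d) : ℝ) : ℂ) •
    (((1 : ℂ) / 2) • ((1 : Matrix (Fin d × Fin d) (Fin d × Fin d) ℂ) - swapOp d))

/-- `k`-fold tensor (Kronecker) power of a matrix. -/
def kpow {ι : Type*} (M : Matrix ι ι ℂ) (k : ℕ) :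
    Matrix (Fin k → ι) (Fin k → ι) ℂ :=
  Matrix.of fun x y => ∏ t, M (x t) (y t)

/-- The hiding state `τ₁ = ((ρ_s+ρ_a)/2)^{⊗k}`. -/
noncomputable def tau₁ (d k : ℕ) :
    Matrix (Fin k → Fin d × Fin d) (Fin k → Fin d × Fin d) ℂ :=
  kpow (((1 : ℂ) / 2) • (wernerSym d + wernerAsym d)) k

/-- The hiding state `τ₂ = ρ_s^{⊗k}`. -/
noncomputable def tau₂ (d k : ℕ) :
    Matrix (Fin k → Fin d × Fin d) (Fin k → Fin d × Fin d) ℂ :=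
  kpow (wernerSym d) k

/-- The Bell states `|φ₊⟩, |φ₋⟩, |ψ₊⟩, |ψ₋⟩` on `ℂ² ⊗ ℂ²`. -/
noncomputable def phiPlus : Fin 2 × Fin 2 → ℂ := fun x =>
  if x = ((0 : Fin 2), (0 : Fin 2)) then ((Real.sqrt 2 : ℝ) : ℂ)⁻¹
  else if x = ((1 : Fin 2), (1 : Fin 2)) then ((Real.sqrt 2 : ℝ) : ℂ)⁻¹ else 0

noncomputable def phiMinus : Fin 2 × Fin 2 → ℂ := fun x =>
  if x = ((0 : Fin 2), (0 : Fin 2)) then ((Real.sqrt 2 : ℝ) : ℂ)⁻¹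
  else if x = ((1 : Fin 2), (1 : Fin 2)) then -((Real.sqrt 2 : ℝ) : ℂ)⁻¹ else 0

noncomputable def psiPlus : Fin 2 × Fin 2 → ℂ := fun x =>
  if x = ((0 : Fin 2), (1 : Fin 2)) then ((Real.sqrt 2 : ℝ) : ℂ)⁻¹
  else if x = ((1 : Fin 2), (0 : Fin 2)) then ((Real.sqrt 2 : ℝ) : ℂ)⁻¹ else 0

noncomputable def psiMinus : Fin 2 × Fin 2 → ℂ := fun x =>
  if x = ((0 : Fin 2), (1 : Fin 2)) then ((Real.sqrt 2 : ℝ) : ℂ)⁻¹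
  else if x = ((1 : Fin 2), (0 : Fin 2)) then -((Real.sqrt 2 : ℝ) : ℂ)⁻¹ else 0

/-- The candidate NPT bound entangled state
`ρ = (1/4)(|φ₊⟩⟨φ₊|⊗τ₁⊗τ₁ + |φ₋⟩⟨φ₋|⊗τ₁⊗τ₂ + |ψ₊⟩⟨ψ₊|⊗τ₂⊗τ₁ + |ψ₋⟩⟨ψ₋|⊗τ₂⊗τ₂)`. -/
noncomputable def rhoNPT (d k : ℕ) :
    Matrix ((Fin 2 × Fin 2) × ((Fin k → Fin d × Fin d) × (Fin k → Fin d × Fin d)))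
      ((Fin 2 × Fin 2) × ((Fin k → Fin d × Fin d) × (Fin k → Fin d × Fin d))) ℂ :=
  ((1 : ℂ) / 4) •
    (Matrix.vecMulVec phiPlus (star phiPlus) ⊗ₖ (tau₁ d k ⊗ₖ tau₁ d k) +
      Matrix.vecMulVec phiMinus (star phiMinus) ⊗ₖ (tau₁ d k ⊗ₖ tau₂ d k) +
      Matrix.vecMulVec psiPlus (star psiPlus) ⊗ₖ (tau₂ d k ⊗ₖ tau₁ d k) +
      Matrix.vecMulVec psiMinus (star psiMinus) ⊗ₖ (tau₂ d k ⊗ₖ tau₂ d k))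

/-- Partial transpose over all of Bob's subsystems: the `B` qubit together with Bob's
halves of the two blocks of `k` pairs `ℂ^d⊗ℂ^d`. -/
def ptBob16 {d k : ℕ}
    (M : Matrix ((Fin 2 × Fin 2) × ((Fin k → Fin d × Fin d) × (Fin k → Fin d × Fin d)))
      ((Fin 2 × Fin 2) × ((Fin k → Fin d × Fin d) × (Fin k → Fin d × Fin d))) ℂ) :
    Matrix ((Fin 2 × Fin 2) × ((Fin k → Fin d × Fin d) × (Fin k → Fin d × Fin d)))
      ((Fin 2 × Fin 2) × ((Fin k → Fin d × Fin d) × (Fin k → Fin d × Fin d))) ℂ :=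
  Matrix.of fun x y =>
    M ((x.1.1, y.1.2),
        (fun t => ((x.2.1 t).1, (y.2.1 t).2), fun t => ((x.2.2 t).1, (y.2.2 t).2)))
      ((y.1.1, x.1.2),
        (fun t => ((y.2.1 t).1, (x.2.1 t).2), fun t => ((y.2.2 t).1, (x.2.2 t).2)))

variable {d k : ℕ}

lemma sum3 {A B C : Type*} [Fintype A] [Fintype B] [Fintype C]
    (f : A → ℂ) (g : B → ℂ) (h : C → ℂ) :
    ∑ a : A, ∑ b : B, ∑ c : C, f a * g b * h c
      = (∑ a, f a) * (∑ b, g b) * (∑ c, h c) := by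
  rw [Finset.sum_mul_sum, Finset.sum_mul_sum]
  simp only [Finset.sum_mul, mul_assoc]
  exact Finset.sum_congr rfl fun a _ => Finset.sum_comm

noncomputable def delta {d : ℕ} (p : Fin d × Fin d) : ℂ := if p.1 = p.2 then 1 else 0

noncomputable def diagW {d k : ℕ} (f : Fin k → Fin d × Fin d) : ℂ := ∏ t, delta (f t)

noncomputable def wS {d : ℕ} (M : Matrix (Fin d × Fin d) (Fin d × Fin d) ℂ) : ℂ :=
  ∑ a : Fin d, ∑ b : Fin d, M (a, b) (b, a)

lemma Wlem (M : Matrix (Fin d × Fin d) (Fin d × Fin d) ℂ) :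
    ∑ f : Fin k → Fin d × Fin d, ∑ f' : Fin k → Fin d × Fin d,
      diagW f * diagW f' * ∏ t, M ((f t).1, (f' t).2) ((f' t).1, (f t).2)
      = (wS M) ^ k := by
  have h1 : ∀ f f' : Fin k → Fin d × Fin d,
      diagW f * diagW f' * ∏ t, M ((f t).1, (f' t).2) ((f' t).1, (f t).2)
        = ∏ t, (delta (f t) * delta (f' t) * M ((f t).1, (f' t).2) ((f' t).1, (f t).2)) := by
    intro f f'
    rw [diagW, diagW, ← Finset.prod_mul_distrib, ← Finset.prod_mul_distrib]
  simp only [h1]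
  trans (∑ z : (Fin k → Fin d × Fin d) × (Fin k → Fin d × Fin d),
      ∏ t, (delta (z.1 t) * delta (z.2 t) * M ((z.1 t).1, (z.2 t).2) ((z.2 t).1, (z.1 t).2)))
  · rw [Fintype.sum_prod_type]
  trans (∑ p : Fin k → (Fin d × Fin d) × (Fin d × Fin d),
      ∏ t, (delta ((p t).1) * delta ((p t).2) * M (((p t).1).1, ((p t).2).2) (((p t).2).1, ((p t).1).2)))
  · exact (Fintype.sum_equiv (Equiv.arrowProdEquivProdArrow (Fin k) (fun _ => Fin d × Fin d) (fun _ => Fin d × Fin d))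
      _ _ (fun p => rfl)).symm
  rw [← Fintype.piFinset_univ,
    ← Finset.prod_univ_sum (fun _ : Fin k => (univ : Finset ((Fin d × Fin d) × (Fin d × Fin d))))
      (fun _ w => delta w.1 * delta w.2 * M (w.1.1, w.2.2) (w.2.1, w.1.2)),
    Finset.prod_const]
  congr 1
  · rw [wS]
    simp only [delta, Fintype.sum_prod_type, ite_mul, one_mul, zero_mul,
      Finset.sum_ite_eq, Finset.mem_univ, if_true]
    simp [Finset.sum_ite_irrel, Finset.sum_ite_eq, Finset.sum_const_zero]
  · simp


lemma wS_smul_add (c : ℂ) (A B : Matrix (Fin d × Fin d) (Fin d × Fin d) ℂ) :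
    wS (c • (A + B)) = c * (wS A + wS B) := by
  simp [wS, Finset.mul_sum, Finset.sum_add_distrib, mul_add]

lemma cast_ne (hd : 2 ≤ d) : ((d:ℂ)^2 + d) ≠ 0 ∧ ((d:ℂ)^2 - d) ≠ 0 := by
  have h1 : (2:ℝ) ≤ (d:ℝ) := by exact_mod_cast hd
  have e1 : ((d:ℂ)^2 + d) = (((d:ℝ)^2 + d : ℝ) : ℂ) := by push_cast; ring
  have e2 : ((d:ℂ)^2 - d) = (((d:ℝ)^2 - d : ℝ) : ℂ) := by push_cast; ring
  rw [e1, e2, Ne, Ne, Complex.ofReal_eq_zero, Complex.ofReal_eq_zero]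
  constructor <;> nlinarith

lemma sum_ite_d : ∑ x : Fin d, ∑ y : Fin d, (if x = y then (1:ℂ) else 0) = (d:ℂ) := by
  simp

lemma wS_sym (hd : 2 ≤ d) : wS (wernerSym d) = 1 := by
  have hne := (cast_ne hd).1
  have hcond : ∀ x y : Fin d, (x = y ∧ y = x) ↔ x = y := fun x y => ⟨fun h => h.1, fun h => ⟨h, h.symm⟩⟩
  simp only [wS, wernerSym, Matrix.smul_apply, Matrix.add_apply, Matrix.one_apply,
    swapOp, Matrix.of_apply, smul_eq_mul, Prod.mk.injEq, hcond, and_self, if_true]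
  have : ∀ x y : Fin d,
      (((2 / ((d:ℝ)^2 + d) : ℝ) : ℂ)) * (1/2 * ((if x = y then (1:ℂ) else 0) + 1))
        = (1/((d:ℂ)^2 + d)) * (if x = y then (1:ℂ) else 0) + 1/((d:ℂ)^2 + d) := by
    intro x y
    push_cast
    ring
  simp only [this, Finset.sum_add_distrib, ← Finset.mul_sum, sum_ite_d]
  simp only [Finset.sum_const, Finset.card_univ, Fintype.card_fin, nsmul_eq_mul]
  field_simp
  ring

lemma wS_asym (hd : 2 ≤ d) : wS (wernerAsym d) = -1 := by
  have hne := (cast_ne hd).2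
  have hcond : ∀ x y : Fin d, (x = y ∧ y = x) ↔ x = y := fun x y => ⟨fun h => h.1, fun h => ⟨h, h.symm⟩⟩
  simp only [wS, wernerAsym, Matrix.smul_apply, Matrix.sub_apply, Matrix.one_apply,
    swapOp, Matrix.of_apply, smul_eq_mul, Prod.mk.injEq, hcond, and_self, if_true]
  have : ∀ x y : Fin d,
      (((2 / ((d:ℝ)^2 - d) : ℝ) : ℂ)) * (1/2 * ((if x = y then (1:ℂ) else 0) - 1))
        = (1/((d:ℂ)^2 - d)) * (if x = y then (1:ℂ) else 0) - 1/((d:ℂ)^2 - d) := by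
    intro x y
    push_cast
    ring
  simp only [this, Finset.sum_sub_distrib, ← Finset.mul_sum, sum_ite_d]
  simp only [Finset.sum_const, Finset.card_univ, Fintype.card_fin, nsmul_eq_mul]
  field_simp
  have h1 : (-1 + (d:ℂ)) ≠ 0 := by
    intro h; apply hne; linear_combination (d:ℂ) * h
  have h2 : (-1 + (d:ℂ))⁻¹ * (-1 + d) = 1 := inv_mul_cancel₀ h1
  linear_combination (-1:ℂ) * h2

lemma wS_mix (hd : 2 ≤ d) : wS (((1:ℂ)/2) • (wernerSym d + wernerAsym d)) = 0 := by
  rw [wS_smul_add, wS_sym hd, wS_asym hd]; ring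

noncomputable def uvec (d k : ℕ) :
    (Fin 2 × Fin 2) × ((Fin k → Fin d × Fin d) × (Fin k → Fin d × Fin d)) → ℂ :=
  fun x => phiPlus x.1 * (diagW x.2.1 * diagW x.2.2)

noncomputable def bellB (v : Fin 2 × Fin 2 → ℂ) : ℂ :=
  ∑ q : Fin 2 × Fin 2, ∑ q' : Fin 2 × Fin 2,
    (starRingEnd ℂ) (phiPlus q) * phiPlus q' *
      (v (q.1, q'.2) * (starRingEnd ℂ) (v (q'.1, q.2)))

lemma diagW_conj (f : Fin k → Fin d × Fin d) : (starRingEnd ℂ) (diagW f) = diagW f := by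
  simp [diagW, delta, map_prod, apply_ite]

lemma sum_pair_factor {A B C : Type*} [Fintype A] [Fintype B] [Fintype C]
    (P : A → A → ℂ) (Q : B → B → ℂ) (Rr : C → C → ℂ) :
    ∑ x : A × (B × C), ∑ y : A × (B × C),
        P x.1 y.1 * Q x.2.1 y.2.1 * Rr x.2.2 y.2.2
      = (∑ a, ∑ a', P a a') * (∑ b, ∑ b', Q b b') * (∑ c, ∑ c', Rr c c') := by
  simp only [Fintype.sum_prod_type]
  simp only [sum3]

lemma quad_term (v : Fin 2 × Fin 2 → ℂ) (M N : Matrix (Fin d × Fin d) (Fin d × Fin d) ℂ) :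
    star (uvec d k) ⬝ᵥ
        (ptBob16 (Matrix.vecMulVec v (star v) ⊗ₖ (kpow M k ⊗ₖ kpow N k)) *ᵥ uvec d k)
      = bellB v * (wS M) ^ k * (wS N) ^ k := by
  simp only [dotProduct, Matrix.mulVec, Finset.mul_sum]
  trans (∑ x : (Fin 2 × Fin 2) × ((Fin k → Fin d × Fin d) × (Fin k → Fin d × Fin d)),
      ∑ y : (Fin 2 × Fin 2) × ((Fin k → Fin d × Fin d) × (Fin k → Fin d × Fin d)),
      (fun q q' => (starRingEnd ℂ) (phiPlus q) * phiPlus q' *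
        (v (q.1, q'.2) * (starRingEnd ℂ) (v (q'.1, q.2)))) x.1 y.1 *
      (fun f f' => diagW f * diagW f' *
        ∏ t, M ((f t).1, (f' t).2) ((f' t).1, (f t).2)) x.2.1 y.2.1 *
      (fun g g' => diagW g * diagW g' *
        ∏ t, N ((g t).1, (g' t).2) ((g' t).1, (g t).2)) x.2.2 y.2.2)
  · refine Finset.sum_congr rfl fun x _ => Finset.sum_congr rfl fun y _ => ?_
    simp only [uvec, ptBob16, Matrix.of_apply, Matrix.kroneckerMap_apply,
      Matrix.vecMulVec_apply, kpow, Pi.star_apply, _root_.map_mul, diagW_conj,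
      Complex.star_def]
    ring
  · refine (sum_pair_factor
        (fun q q' => (starRingEnd ℂ) (phiPlus q) * phiPlus q' *
          (v (q.1, q'.2) * (starRingEnd ℂ) (v (q'.1, q.2))))
        (fun f f' => diagW f * diagW f' *
          ∏ t, M ((f t).1, (f' t).2) ((f' t).1, (f t).2))
        (fun g g' => diagW g * diagW g' *
          ∏ t, N ((g t).1, (g' t).2) ((g' t).1, (g t).2))).trans ?_
    rw [show (∑ b : Fin k → Fin d × Fin d, ∑ b' : Fin k → Fin d × Fin d,
        diagW b * diagW b' * ∏ t, M ((b t).1, (b' t).2) ((b' t).1, (b t).2)) = (wS M) ^ k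
      from Wlem M]
    rw [show (∑ c : Fin k → Fin d × Fin d, ∑ c' : Fin k → Fin d × Fin d,
        diagW c * diagW c' * ∏ t, N ((c t).1, (c' t).2) ((c' t).1, (c t).2)) = (wS N) ^ k
      from Wlem N]
    rfl

lemma bellB_psiMinus : bellB psiMinus = -(1/2 : ℂ) := by
  have hs : ((Real.sqrt 2 : ℝ) : ℂ)⁻¹ * ((Real.sqrt 2 : ℝ) : ℂ)⁻¹ = 1/2 := by
    rw [← mul_inv, ← Complex.ofReal_mul, Real.mul_self_sqrt (by norm_num)]
    norm_num
  simp only [bellB, phiPlus, psiMinus, Fintype.sum_prod_type, Fin.sum_univ_succ,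
    Finset.sum_empty, Fin.sum_univ_zero, map_inv₀, Complex.conj_ofReal, map_neg, map_zero]
  norm_num [Prod.ext_iff]
  rw [hs]
  norm_num

/-- the state `ρ` built from Bell states flagged by the hiding states
has non-positive partial transpose with respect to Bob's subsystems (it is NPT). -/
theorem rhoNPT_not_ppt (d k : ℕ) (hd : 2 ≤ d) (hk : 1 ≤ k) :
    ¬ (ptBob16 (rhoNPT d k)).PosSemidef := by
  intro hpsd
  have hR : ptBob16 (rhoNPT d k)
      = (1/4 : ℂ) •
        (ptBob16 (Matrix.vecMulVec phiPlus (star phiPlus) ⊗ₖ (tau₁ d k ⊗ₖ tau₁ d k))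
          + ptBob16 (Matrix.vecMulVec phiMinus (star phiMinus) ⊗ₖ (tau₁ d k ⊗ₖ tau₂ d k))
          + ptBob16 (Matrix.vecMulVec psiPlus (star psiPlus) ⊗ₖ (tau₂ d k ⊗ₖ tau₁ d k))
          + ptBob16 (Matrix.vecMulVec psiMinus (star psiMinus) ⊗ₖ (tau₂ d k ⊗ₖ tau₂ d k))) := by
    ext x y
    simp [ptBob16, rhoNPT, Matrix.smul_apply, Matrix.add_apply]
  have h := hpsd.dotProduct_mulVec_nonneg (uvec d k)
  rw [hR, Matrix.smul_mulVec, Matrix.add_mulVec, Matrix.add_mulVec, Matrix.add_mulVec,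
    dotProduct_smul, dotProduct_add, dotProduct_add, dotProduct_add] at h
  simp only [tau₁, tau₂, quad_term, wS_mix hd, wS_sym hd, bellB_psiMinus] at h
  have hk0 : (0:ℂ)^k = 0 := zero_pow (by omega)
  rw [hk0] at h
  simp only [one_pow, zero_mul, mul_zero, mul_one, zero_add, add_zero, smul_eq_mul] at h
  norm_num [Complex.le_def] at h
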